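/- Let P be a nonnegative stable n×n matrix with critical node set C and downstream node set D (nodes outside C accessible from C). If z ∈ ℝ^n satisfies Pz ≤ z, then P_{CC} z_C = z_C and z_D = 0. -/

import Mathlib

noncomputable section
open Filter Topology Set
open scoped Classical

/-- A square real matrix is *stable* if all of its orbits are bounded. -/
def MatStable {ι : Type*} [Fintype ι] [DecidableEq ι] (P : Matrix ι ι ℝ) : Prop :=
  ∀ x : ι → ℝ, ∃ c : ℝ, ∀ k : ℕ, ‖(P ^ k).mulVec x‖ ≤ c

/-- Spectral radius of a real square matrix, via its complex spectrum. -/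
def SpecRad {ι : Type*} [Fintype ι] (Q : Matrix ι ι ℝ) : ℝ :=
  haveI := Classical.decEq ι
  sSup {r : ℝ | ∃ μ : ℂ, μ ∈ spectrum ℂ (Q.map (fun a => (a : ℂ))) ∧ r = ‖μ‖}

/-- `i` has access to `j` in the digraph of the nonnegative matrix `P`. -/
def AccessM {n : ℕ} (P : Matrix (Fin n) (Fin n) ℝ) : Fin n → Fin n → Prop :=
  Relation.ReflTransGen (fun i j => 0 < P i j)

/-- `C` is a class of `P` (an equivalence class of mutual access). -/
def IsClass {n : ℕ} (P : Matrix (Fin n) (Fin n) ℝ) (C : Set (Fin n)) : Prop :=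
  ∃ i, C = {j | AccessM P i j ∧ AccessM P j i}

/-- Spectral radius of the principal submatrix `P_{CC}`. -/
def SpecRadOn {n : ℕ} (P : Matrix (Fin n) (Fin n) ℝ) (C : Set (Fin n)) : ℝ :=
  haveI : Fintype C := Fintype.ofFinite _
  SpecRad (Matrix.of fun i j : C => P i.1 j.1)

/-- A critical class of a stable nonnegative matrix. -/
def IsCriticalClass {n : ℕ} (P : Matrix (Fin n) (Fin n) ℝ) (C : Set (Fin n)) : Prop :=
  IsClass P C ∧ SpecRadOn P C = 1

/-- The set of critical nodes of `P`. -/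
def CriticalNodes {n : ℕ} (P : Matrix (Fin n) (Fin n) ℝ) : Set (Fin n) :=
  {i | ∃ C, IsCriticalClass P C ∧ i ∈ C}

/-- The subdifferential of `f` at `v` relative to the domain `D`. -/
def Subdiff {m n : ℕ} (f : (Fin m → ℝ) → (Fin n → ℝ)) (D : Set (Fin m → ℝ))
    (v : Fin m → ℝ) : Set (Matrix (Fin n) (Fin m) ℝ) :=
  {M | ∀ x ∈ D, M.mulVec (x - v) ≤ f x - f v}

/-!
If `Q` is a nonnegative irreducible block and `V ≥ 0` with `Q V ≤ V` but `Q V ≠ V`, the defect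
`V - Q V` spreads through the block, so `Q ^ K V = V - ∑_{m<K} Q ^ m (V - Q V) < V` with `V > 0`
for some `K`; measuring an eigenvector in the sup norm weighted by `V` then puts every eigenvalue
of `Q` strictly inside the unit disc. Hence on a critical class every nonnegative `x` with
`P x ≤ x` is `P`-harmonic and leaks nothing out of the class, so it vanishes at every node
downstream of it. Stability makes the monotone orbits `P ^ k (-z)` and `P ^ k |g|` converge, where
`g = lim P ^ k (-z)` is `P`-harmonic; applying the above to `z + g ≥ 0` and to
`lim P ^ k |g| ≥ |g|` yields both claims.
-/

namespace Matrix

variable {ι : Type*} [Fintype ι] {A : Matrix ι ι ℝ}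

theorem mulVec_nonneg_of_nonneg (hA : ∀ i j, 0 ≤ A i j) {x : ι → ℝ} (hx : 0 ≤ x) :
    0 ≤ A *ᵥ x :=
  fun i => Finset.sum_nonneg fun j _ => mul_nonneg (hA i j) (hx j)

theorem mulVec_mono_of_nonneg (hA : ∀ i j, 0 ≤ A i j) : Monotone (A *ᵥ ·) :=
  fun _ _ hxy i => Finset.sum_le_sum fun j _ => mul_le_mul_of_nonneg_left (hxy j) (hA i j)

theorem mul_le_mulVec_apply (hA : ∀ i j, 0 ≤ A i j) {x : ι → ℝ} (hx : 0 ≤ x) (i j : ι) :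
    A i j * x j ≤ (A *ᵥ x) i :=
  Finset.single_le_sum (f := fun j => A i j * x j) (fun j _ => mul_nonneg (hA i j) (hx j))
    (Finset.mem_univ j)

theorem abs_mulVec_le (hA : ∀ i j, 0 ≤ A i j) (x : ι → ℝ) : |A *ᵥ x| ≤ A *ᵥ |x| := fun i => by
  simpa [mulVec, dotProduct, abs_mul, abs_of_nonneg (hA i _)] using
    Finset.abs_sum_le_sum_abs (fun j => A i j * x j) Finset.univ

theorem apply_eq_zero_of_apply_eq_zero (hA : ∀ i j, 0 ≤ A i j) {x : ι → ℝ} (hx0 : 0 ≤ x)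
    (hx : A *ᵥ x ≤ x) {p q : ι} (hp : x p = 0) (hpq : 0 < A p q) : x q = 0 := by
  have h := (mul_le_mulVec_apply hA hx0 p q).trans (hx p)
  rw [hp] at h
  exact le_antisymm (nonpos_of_mul_nonpos_right h hpq) (hx0 q)

section Pow

variable [DecidableEq ι]

theorem sum_range_pow_mulVec_sub (A : Matrix ι ι ℝ) (x : ι → ℝ) (k : ℕ) :
    ∑ m ∈ Finset.range k, A ^ m *ᵥ (x - A *ᵥ x) = x - A ^ k *ᵥ x := by
  induction k with
  | zero => simp
  | succ k ih =>
    rw [Finset.sum_range_succ, ih, mulVec_sub, mulVec_mulVec, ← pow_succ]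
    abel

theorem exists_pow_apply_pos_of_reflTransGen (hA : ∀ i j, 0 ≤ A i j) {a b : ι}
    (h : Relation.ReflTransGen (fun i j => 0 < A i j) a b) : ∃ m, 0 < (A ^ m) a b := by
  induction h with
  | refl => exact ⟨0, by simp⟩
  | @tail p q _ hpq ih =>
    obtain ⟨m, hm⟩ := ih
    refine ⟨m + 1, (mul_pos hm hpq).trans_le ?_⟩
    rw [pow_succ]
    exact Finset.single_le_sum (f := fun l => (A ^ m) a l * A l q)
      (fun l _ => mul_nonneg (pow_apply_nonneg hA m a l) (hA l q)) (Finset.mem_univ p)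


theorem norm_lt_one_of_mem_spectrum_map (hA : ∀ i j, 0 ≤ A i j) {V : ι → ℝ}
    (hV : ∀ i, 0 < V i) (hAV : ∀ i, (A *ᵥ V) i < V i) {μ : ℂ}
    (hμ : μ ∈ spectrum ℂ (A.map ((↑) : ℝ → ℂ))) : ‖μ‖ < 1 := by
  rw [← spectrum_toLin', ← Module.End.hasEigenvalue_iff_mem_spectrum] at hμ
  obtain ⟨v, hv, hv0⟩ := hμ.exists_hasEigenvector
  have hAv : A.map (↑) *ᵥ v = μ • v := Module.End.mem_eigenspace_iff.1 hv
  obtain ⟨b, hb⟩ := Function.ne_iff.1 hv0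
  obtain ⟨a, -, ha⟩ :=
    Finset.exists_max_image Finset.univ (fun b => ‖v b‖ / V b) ⟨b, Finset.mem_univ b⟩
  set t := ‖v a‖ / V a
  have hvt : ∀ b, ‖v b‖ ≤ t * V b := fun b => (div_le_iff₀ (hV b)).1 (ha b (Finset.mem_univ b))
  have ht : 0 < t := pos_of_mul_pos_left ((norm_pos_iff.2 hb).trans_le (hvt b)) (hV b).le
  have hva : ‖v a‖ = t * V a := (div_mul_cancel₀ _ (hV a).ne').symm
  have key : ‖μ‖ * ‖v a‖ < ‖v a‖ := calc
    ‖μ‖ * ‖v a‖ = ‖∑ b, (A a b : ℂ) * v b‖ := by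
      rw [← norm_mul, ← smul_eq_mul, ← Pi.smul_apply, ← hAv]; rfl
    _ ≤ ∑ b, A a b * ‖v b‖ := by
      refine (norm_sum_le _ _).trans_eq (Finset.sum_congr rfl fun b _ => ?_)
      rw [norm_mul, Complex.norm_real, Real.norm_of_nonneg (hA a b)]
    _ ≤ ∑ b, A a b * (t * V b) :=
      Finset.sum_le_sum fun b _ => mul_le_mul_of_nonneg_left (hvt b) (hA a b)
    _ = t * (A *ᵥ V) a := by
      simp only [mulVec, dotProduct, Finset.mul_sum]; exact Finset.sum_congr rfl fun b _ => by ring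
    _ < t * V a := mul_lt_mul_of_pos_left (hAV a) ht
    _ = ‖v a‖ := hva.symm
  exact (mul_lt_iff_lt_one_left (hva ▸ mul_pos ht (hV a))).1 key

theorem specRad_lt_one_of_pow_mulVec_lt (hA : ∀ i j, 0 ≤ A i j) {V : ι → ℝ}
    (hV : ∀ i, 0 < V i) {K : ℕ} (hK : ∀ i, (A ^ K *ᵥ V) i < V i) : SpecRad A < 1 := by
  obtain rfl : ‹DecidableEq ι› = Classical.decEq ι := Subsingleton.elim _ _
  have hspec : ∀ μ ∈ spectrum ℂ (A.map ((↑) : ℝ → ℂ)), ‖μ‖ < 1 := fun μ hμ => by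
    have h := norm_lt_one_of_mem_spectrum_map (μ := μ ^ K) (pow_apply_nonneg hA K) hV hK
      (by rw [show ((↑) : ℝ → ℂ) = Complex.ofRealHom from rfl, Matrix.map_pow]
          exact spectrum.pow_mem_pow _ K hμ)
    rw [norm_pow] at h
    exact lt_of_pow_lt_pow_left₀ K zero_le_one (by rwa [one_pow])
  unfold SpecRad
  set S := {r : ℝ | ∃ μ : ℂ, μ ∈ spectrum ℂ (A.map ((↑) : ℝ → ℂ)) ∧ r = ‖μ‖}
  have hfin : S.Finite := ((finite_spectrum _).image (‖·‖)).subset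
    (by rintro _ ⟨μ, hμ, rfl⟩; exact ⟨μ, hμ, rfl⟩)
  rcases S.eq_empty_or_nonempty with h | h
  · rw [h, Real.sSup_empty]; exact one_pos
  · exact (hfin.csSup_lt_iff h).2 (by rintro _ ⟨μ, hμ, rfl⟩; exact hspec μ hμ)

theorem mulVec_eq_self_of_not_specRad_lt_one (hA : ∀ i j, 0 ≤ A i j)
    (hirr : ∀ a b, ∃ m, 0 < (A ^ m) a b) (hρ : ¬ SpecRad A < 1) {V : ι → ℝ} (hV : 0 ≤ V)
    (hAV : A *ᵥ V ≤ V) : A *ᵥ V = V := by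
  by_contra hne
  obtain ⟨j, hj⟩ : ∃ j, (A *ᵥ V) j < V j := by
    by_contra! h
    exact hne (le_antisymm hAV h)
  have hG : 0 ≤ V - A *ᵥ V := sub_nonneg.2 hAV
  choose m hm using fun i => hirr i j
  set K := Finset.univ.sup m + 1
  have hT : ∀ i, 0 < (∑ k ∈ Finset.range K, A ^ k *ᵥ (V - A *ᵥ V)) i := fun i => calc
    0 < (A ^ m i) i j * (V - A *ᵥ V) j := mul_pos (hm i) (sub_pos.2 hj)
    _ ≤ (A ^ m i *ᵥ (V - A *ᵥ V)) i := mul_le_mulVec_apply (pow_apply_nonneg hA _) hG i j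
    _ ≤ (∑ k ∈ Finset.range K, A ^ k *ᵥ (V - A *ᵥ V)) i := by
      rw [Finset.sum_apply]
      exact Finset.single_le_sum (fun k _ => mulVec_nonneg_of_nonneg (pow_apply_nonneg hA k) hG i)
        (Finset.mem_range.2 (Nat.lt_succ_of_le (Finset.le_sup (Finset.mem_univ i))))
  simp only [sum_range_pow_mulVec_sub, Pi.sub_apply, sub_pos] at hT
  have hKV i : 0 ≤ (A ^ K *ᵥ V) i := mulVec_nonneg_of_nonneg (pow_apply_nonneg hA K) hV i
  refine hρ (specRad_lt_one_of_pow_mulVec_lt hA (V := V) (K := K) (fun i => ?_) fun i => ?_)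
  · linarith [hT i, hKV i]
  · linarith [hT i]

end Pow

theorem mulVec_apply_eq_and_mul_apply_eq_zero_of_mem (hA : ∀ i j, 0 ≤ A i j) {s : Set ι}
    [Fintype s] [DecidableEq s] (hirr : ∀ a b : s, ∃ m, 0 < ((A.submatrix (↑) (↑)) ^ m) a b)
    (hρ : ¬ SpecRad (A.submatrix ((↑) : s → ι) (↑)) < 1) {x : ι → ℝ} (hx0 : 0 ≤ x)
    (hx : A *ᵥ x ≤ x) {i : ι} (hi : i ∈ s) :
    (A *ᵥ x) i = x i ∧ ∀ j ∉ s, A i j * x j = 0 := by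
  set V : s → ℝ := fun a => x a
  have hsplit : ∀ a : s,
      (A.submatrix (↑) (↑) *ᵥ V) a + ∑ j : {j // j ∉ s}, A a j * x j = (A *ᵥ x) a := fun a => by
    simp only [mulVec, dotProduct, submatrix_apply, V]
    convert Fintype.sum_subtype_add_sum_subtype (· ∈ s) fun j => A a j * x j
  have hleak : ∀ a : s, 0 ≤ ∑ j : {j // j ∉ s}, A a j * x j :=
    fun a => Finset.sum_nonneg fun j _ => mul_nonneg (hA _ _) (hx0 _)
  have hV := mulVec_eq_self_of_not_specRad_lt_one (A := A.submatrix ((↑) : s → ι) (↑))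
    (fun a b => hA a b) hirr hρ (fun a => hx0 a) fun a => by linarith [hsplit a, hleak a, hx a]
  have h := hsplit ⟨i, hi⟩
  rw [hV] at h
  have hzero : ∑ j : {j // j ∉ s}, A i j * x j = 0 := by
    linarith [hx i, hleak ⟨i, hi⟩]
  refine ⟨by linarith, fun j hj => ?_⟩
  exact (Finset.sum_eq_zero_iff_of_nonneg fun j _ => mul_nonneg (hA _ _) (hx0 _)).1 hzero
    ⟨j, hj⟩ (Finset.mem_univ _)

end Matrix

open Matrix

theorem MatStable.exists_mulVec_eq_self_ge {ι : Type*} [Fintype ι] [DecidableEq ι]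
    {A : Matrix ι ι ℝ} (hstab : MatStable A) (hA : ∀ i j, 0 ≤ A i j) {v : ι → ℝ}
    (hv : v ≤ A *ᵥ v) : ∃ w, v ≤ w ∧ A *ᵥ w = w := by
  set f : ℕ → ι → ℝ := fun k => A ^ k *ᵥ v
  have hmono : Monotone f := monotone_nat_of_le_succ fun k => by
    simpa [f, pow_succ, ← mulVec_mulVec] using mulVec_mono_of_nonneg (pow_apply_nonneg hA k) hv
  obtain ⟨c, hc⟩ := hstab v
  have hbdd : BddAbove (range f) := ⟨fun _ => c, by
    rintro _ ⟨k, rfl⟩ i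
    show f k i ≤ c
    exact (Real.le_norm_self _).trans ((norm_le_pi_norm (f k) i).trans (hc k))⟩
  have hlim := tendsto_atTop_ciSup hmono hbdd
  refine ⟨⨆ k, f k, by simpa [f] using le_ciSup hbdd 0,
    tendsto_nhds_unique (f := fun k => A *ᵥ f k) (l := atTop) ?_ ?_⟩
  · exact ((continuous_const.matrix_mulVec continuous_id).tendsto _).comp hlim
  · have hshift : (fun k => A *ᵥ f k) = f ∘ (· + 1) := by
      ext k : 1
      simp [f, pow_succ', mulVec_mulVec]
    rw [hshift]
    exact hlim.comp (tendsto_add_atTop_nat 1)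

section Critical

variable {n : ℕ} {P : Matrix (Fin n) (Fin n) ℝ} {C : Set (Fin n)}

theorem IsClass.reflTransGen_subtype (hC : IsClass P C) (a b : C) :
    Relation.ReflTransGen (fun i j : C => 0 < P i j) a b := by
  obtain ⟨i₀, rfl⟩ := hC
  obtain ⟨a, ha⟩ := a
  obtain ⟨b, hb⟩ := b
  have hab : AccessM P a b := ha.2.trans hb.1
  induction hab with
  | refl => rfl
  | @tail p q hap hpq ih =>
    have hp : p ∈ {j | AccessM P i₀ j ∧ AccessM P j i₀} :=
      ⟨ha.1.trans hap, Relation.ReflTransGen.head hpq hb.2⟩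
    exact (ih hp).tail (b := ⟨p, hp⟩) hpq

theorem IsCriticalClass.mulVec_apply_eq_and_mul_apply_eq_zero (hP : ∀ i j, 0 ≤ P i j)
    (hC : IsCriticalClass P C) {x : Fin n → ℝ} (hx0 : 0 ≤ x) (hx : P *ᵥ x ≤ x) {i : Fin n}
    (hi : i ∈ C) : (P *ᵥ x) i = x i ∧ ∀ j ∉ C, P i j * x j = 0 :=
  letI : Fintype C := Fintype.ofFinite C
  mulVec_apply_eq_and_mul_apply_eq_zero_of_mem hP
    (fun a b => exists_pow_apply_pos_of_reflTransGen (A := P.submatrix ((↑) : C → Fin n) (↑))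
      (fun i j => hP i j) (hC.1.reflTransGen_subtype a b)) hC.2.not_lt hx0 hx hi

theorem IsCriticalClass.apply_eq_zero_of_accessM (hP : ∀ i j, 0 ≤ P i j)
    (hC : IsCriticalClass P C) {x : Fin n → ℝ} (hx0 : 0 ≤ x) (hx : P *ᵥ x ≤ x) {i j : Fin n}
    (hj : j ∈ C) (hji : AccessM P j i) (hi : i ∉ C) : x i = 0 := by
  suffices i ∈ C ∨ x i = 0 from this.resolve_left hi
  clear hi
  induction hji with
  | refl => exact Or.inl hj
  | @tail p q _ hpq ih =>
    rcases ih with hp | hp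
    · by_cases hq : q ∈ C
      · exact Or.inl hq
      · exact Or.inr ((mul_eq_zero.1
          ((hC.mulVec_apply_eq_and_mul_apply_eq_zero hP hx0 hx hp).2 q hq)).resolve_left hpq.ne')
    · exact Or.inr (apply_eq_zero_of_apply_eq_zero hP hx0 hx hp hpq)

theorem mulVec_apply_eq_of_mem_criticalNodes (hP : ∀ i j, 0 ≤ P i j) {x : Fin n → ℝ}
    (hx0 : 0 ≤ x) (hx : P *ᵥ x ≤ x) {i : Fin n} (hi : i ∈ CriticalNodes P) :
    (P *ᵥ x) i = x i := by
  obtain ⟨C, hC, hiC⟩ := hi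
  exact (hC.mulVec_apply_eq_and_mul_apply_eq_zero hP hx0 hx hiC).1

theorem apply_eq_zero_of_downstream (hP : ∀ i j, 0 ≤ P i j) {x : Fin n → ℝ}
    (hx0 : 0 ≤ x) (hx : P *ᵥ x ≤ x) {i : Fin n} (hi : i ∉ CriticalNodes P)
    (hacc : ∃ j ∈ CriticalNodes P, AccessM P j i) : x i = 0 := by
  obtain ⟨j, ⟨C, hC, hjC⟩, hji⟩ := hacc
  exact hC.apply_eq_zero_of_accessM hP hx0 hx hjC hji fun hiC => hi ⟨C, hC, hiC⟩

end Critical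

/-- if P is a nonnegative stable matrix and P z ≤ z, then the critical
part of z is fixed by the critical principal submatrix and z vanishes on the
downstream nodes. -/
theorem stmt9 {n : ℕ} (P : Matrix (Fin n) (Fin n) ℝ)
    (hpos : ∀ i j, 0 ≤ P i j) (hstab : MatStable P)
    (z : Fin n → ℝ) (hz : P.mulVec z ≤ z) :
    (∀ i ∈ CriticalNodes P,
      ∑ j ∈ Finset.univ.filter (fun j => j ∈ CriticalNodes P), P i j * z j = z i) ∧
    (∀ i, i ∉ CriticalNodes P → (∃ j ∈ CriticalNodes P, AccessM P j i) → z i = 0) := by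
  obtain ⟨g, hzg, hg⟩ := hstab.exists_mulVec_eq_self_ge hpos (v := -z)
    (by simpa [mulVec_neg] using neg_le_neg hz)
  have hu0 : 0 ≤ z + g := neg_le_iff_add_nonneg'.1 hzg
  have hu : P *ᵥ (z + g) ≤ z + g := by
    rw [mulVec_add, hg]
    exact add_le_add_left hz g
  obtain ⟨w, hgw, hw⟩ := hstab.exists_mulVec_eq_self_ge hpos (v := |g|)
    (by simpa [hg] using abs_mulVec_le hpos g)
  have hw0 : 0 ≤ w := (abs_nonneg g).trans hgw
  have hdown : ∀ i, i ∉ CriticalNodes P → (∃ j ∈ CriticalNodes P, AccessM P j i) → z i = 0 := by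
    intro i hi hacc
    have hui := apply_eq_zero_of_downstream hpos hu0 hu hi hacc
    have hwi := apply_eq_zero_of_downstream hpos hw0 hw.le hi hacc
    have hgi : |g i| ≤ 0 := hwi ▸ hgw i
    simp only [Pi.add_apply] at hui
    linarith [abs_nonpos_iff.1 hgi]
  refine ⟨fun i hi => ?_, hdown⟩
  have hPz : (P *ᵥ z) i = z i := by
    simpa [mulVec_add, hg] using mulVec_apply_eq_of_mem_criticalNodes hpos hu0 hu hi
  rw [Finset.sum_filter_of_ne, ← hPz]
  · rfl
  intro j _ hj
  by_contra hjc
  have hij : 0 < P i j := (hpos i j).lt_of_ne fun h => hj (by rw [← h, zero_mul])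
  exact hj (by rw [hdown j hjc ⟨i, hi, .single hij⟩, mul_zero])
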